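/- Let F be a field of characteristic 5. For every permitted coloring of ∂Δ⁵, the alternating cocycle sum of the polynomial c(a,b,c,d,e) = e²+ce+4be+d²+3bd+2ad+c²+3bc+3ac+2b² vanishes: Σ_{i=1}^{6} (−1)^{i−1} c[u_i] = 0 in F, where u_i = {1,…,6}∖{i}. -/

import Mathlib

open Finset

/-- The 5×5 integer matrix 𝓡. -/
def Rmat : Matrix (Fin 5) (Fin 5) ℤ :=
  !![0, -2, 1, 1, -2;
     0, -1, 0, 1, -1;
     -1, 2, -2, 0, 1;
     -1, 3, -2, -1, 2;
     0, 1, -1, 0, 0]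

/-- The table of 2-columns ψ for a tetrahedron with (sorted) vertices indexed by `Fin 4`:
for indices a < c, the value of ψ on the edge joining the a-th and the c-th vertex. -/
def psiPair (F : Type*) [Field F] (a c : Fin 4) : F × F :=
  if a = 0 ∧ c = 1 then (-1, 1)
  else if a = 0 ∧ c = 2 then (2, -1)
  else if a = 0 ∧ c = 3 then (-1, 0)
  else if a = 1 ∧ c = 2 then (-1, 0)
  else if a = 1 ∧ c = 3 then (0, 1)
  else if a = 2 ∧ c = 3 then (1, -1)
  else (0, 0)

/-- ψ_{t,b} for a tetrahedron `t` (a 4-element subset of the vertex set) and an edge `b`: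
zero when `b ⊄ t`, and the corresponding table value otherwise. -/
def psi (F : Type*) [Field F] {V : Type*} [LinearOrder V]
    (t : Finset V) (ht : t.card = 4) (b : Finset V) : F × F :=
  ∑ a : Fin 4, ∑ c : Fin 4,
    if a < c ∧ b = {t.orderEmbOfFin ht a, t.orderEmbOfFin ht c} then psiPair F a c else 0

/-- The i-th vertex (in increasing order) of a pentachoron `u`. -/
def pentVert {V : Type*} [LinearOrder V] (u : Finset V) (hu : u.card = 5) (i : Fin 5) : V :=
  u.orderEmbOfFin hu i

/-- The i-th tetrahedral 3-face of a pentachoron `u`: it omits the i-th vertex. -/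
def pentFace {V : Type*} [LinearOrder V] (u : Finset V) (hu : u.card = 5) (i : Fin 5) :
    Finset V :=
  u.erase (pentVert u hu i)

/-- A coloring χ (assigning a pair (x_t, y_t) ∈ F × F to each tetrahedron) is permitted on a
pentachoron `u` if the column of y-values on its five 3-faces equals 𝓡 applied to the column
of x-values. -/
def PermittedOn {V : Type*} [LinearOrder V] {F : Type*} [Field F]
    (u : Finset V) (hu : u.card = 5) (χ : Finset V → F × F) : Prop :=
  ∀ i : Fin 5,
    (χ (pentFace u hu i)).2 = ∑ j : Fin 5, (Rmat i j : F) * (χ (pentFace u hu j)).1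

/-- The coloring assigning ψ_{t,b} to every tetrahedron `t`. -/
def Xi (F : Type*) [Field F] {V : Type*} [LinearOrder V] (b : Finset V) :
    Finset V → F × F :=
  fun t => if ht : t.card = 4 then psi F t ht b else 0


/-- A coloring of ∂Δ⁵ (vertex set `Fin 6`) is permitted if it is permitted on each of the six
pentachora, i.e., on every 5-element subset of the vertices. -/
def Permitted {F : Type*} [Field F] (χ : Finset (Fin 6) → F × F) : Prop :=
  ∀ (u : Finset (Fin 6)) (hu : u.card = 5), PermittedOn u hu χ

lemma card_erase6 (i : Fin 6) : ((univ : Finset (Fin 6)).erase i).card = 5 := by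
  rw [Finset.card_erase_of_mem (mem_univ i)]
  simp

/-- `xv F χ i j` is the x-value of the coloring χ on the j-th 3-face (the one omitting the
j-th smallest vertex) of the pentachoron u_i = {1,…,6} ∖ {i} of ∂Δ⁵; for the pentachoron
u_i this gives the substitutions a = xv i 0, b = xv i 1, c = xv i 2, d = xv i 3,
e = xv i 4. -/
def xv (F : Type*) [Field F] (χ : Finset (Fin 6) → F × F) (i : Fin 6) (j : Fin 5) : F :=
  (χ (pentFace ((univ : Finset (Fin 6)).erase i) (card_erase6 i) j)).1

/-!
The tetrahedra of `∂Δ⁵` are the complements of its edges, and each lies in exactly two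
pentachora: the complement of `{i, i'}` is a face of `u_i` and of `u_{i'}`. Computing its
y-value through 𝓡 in both gives a linear relation among the fifteen x-values. Six of these
relations (those of the edges 01, 05, 12, 13, 15, 35) already solve for six x-values in terms
of the other nine; after this substitution the alternating sum of `c` is an integer quadratic
form in nine variables all of whose coefficients are divisible by 5.
-/

lemma orderEmbOfFin_univ_erase {n : ℕ} (i : Fin (n + 1))
    (h : ((univ : Finset (Fin (n + 1))).erase i).card = n) (j : Fin n) :
    (univ.erase i).orderEmbOfFin h j = i.succAbove j := by
  refine congrFun (orderEmbOfFin_unique h (fun j => ?_) (Fin.strictMono_succAbove i)).symm j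
  simp [Fin.succAbove_ne i j]

lemma pentFace_univ_erase (i : Fin 6) (j : Fin 5) :
    pentFace (univ.erase i) (card_erase6 i) j = {i, i.succAbove j}ᶜ := by
  ext v
  simp [pentFace, pentVert, orderEmbOfFin_univ_erase, and_comm]

section Coloring

variable {F : Type*} (χ : Finset (Fin 6) → F × F)

def xOpposite (p q : Fin 6) : F := (χ {p, q}ᶜ).1

lemma xOpposite_comm (p q : Fin 6) : xOpposite χ p q = xOpposite χ q p := by
  rw [xOpposite, pair_comm, xOpposite]

variable [Field F]

lemma xv_eq_xOpposite (i : Fin 6) (j : Fin 5) : xv F χ i j = xOpposite χ i (i.succAbove j) := by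
  rw [xv, pentFace_univ_erase, xOpposite]

variable {χ}

lemma Permitted.snd_eq (hχ : Permitted χ) (i : Fin 6) (j : Fin 5) :
    (χ {i, i.succAbove j}ᶜ).2 = ∑ k, (Rmat j k : F) * xOpposite χ i (i.succAbove k) := by
  simpa only [pentFace_univ_erase, xOpposite] using hχ _ (card_erase6 i) j

lemma Permitted.sum_eq_sum (hχ : Permitted χ) {i i' : Fin 6} {j j' : Fin 5}
    (h : i.succAbove j = i') (h' : i'.succAbove j' = i) :
    ∑ k, (Rmat j k : F) * xOpposite χ i (i.succAbove k) =
      ∑ k, (Rmat j' k : F) * xOpposite χ i' (i'.succAbove k) := by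
  rw [← hχ.snd_eq, ← hχ.snd_eq, h, h', pair_comm]

end Coloring

theorem alternating_sum_eq_zero_of_edge_relations {R : Type*} [CommRing R] [CharP R 5]
    (x : Fin 6 → Fin 6 → R) (hx : ∀ p q, x p q = x q p)
    (hrel : ∀ (i i' : Fin 6) (j j' : Fin 5), i.succAbove j = i' → i'.succAbove j' = i →
      ∑ k, (Rmat j k : R) * x i (i.succAbove k) =
        ∑ k, (Rmat j' k : R) * x i' (i'.succAbove k)) :
    ∑ i : Fin 6, (-1 : R) ^ (i : ℕ) *
      (x i (i.succAbove 4) ^ 2 + x i (i.succAbove 2) * x i (i.succAbove 4) +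
        4 * x i (i.succAbove 1) * x i (i.succAbove 4) + x i (i.succAbove 3) ^ 2 +
        3 * x i (i.succAbove 1) * x i (i.succAbove 3) +
        2 * x i (i.succAbove 0) * x i (i.succAbove 3) + x i (i.succAbove 2) ^ 2 +
        3 * x i (i.succAbove 1) * x i (i.succAbove 2) +
        3 * x i (i.succAbove 0) * x i (i.succAbove 2) + 2 * x i (i.succAbove 1) ^ 2) = 0 := by
  have hx_of_lt : ∀ p q, q < p → x p q = x q p := fun p q _ => hx p q
  have r01 := hrel 0 1 0 0 rfl rfl
  have r05 := hrel 0 5 4 0 rfl rfl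
  have r12 := hrel 1 2 1 1 rfl rfl
  have r13 := hrel 1 3 2 1 rfl rfl
  have r15 := hrel 1 5 4 1 rfl rfl
  have r35 := hrel 3 5 4 3 rfl rfl
  simp only [Fin.sum_univ_five, Rmat, Matrix.of_apply, Matrix.cons_val', Matrix.cons_val,
    Matrix.cons_val_fin_one, Fin.succAbove, Fin.reduceCastSucc, Fin.reduceSucc, Fin.reduceLT,
    ↓reduceIte, hx_of_lt] at r01 r05 r12 r13 r15 r35
  simp only [Fin.sum_univ_six, Fin.succAbove, Fin.reduceCastSucc, Fin.reduceSucc, Fin.reduceLT,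
    ↓reduceIte, hx_of_lt, Fin.coe_ofNat_eq_mod, Nat.reduceMod]
  have h12 : x 1 2 = x 1 3 - x 1 5 + x 3 5 - x 4 5 := by linear_combination r15
  have h14 : x 1 4 = x 1 5 + x 2 4 - x 2 5 := by linear_combination r12
  have h05 : x 0 5 = -x 1 3 + 3 * x 1 5 + x 2 3 - 2 * x 2 5 - x 3 5 + 2 * x 4 5 := by
    linear_combination r35
  have h01 : x 0 1 = x 1 3 - x 1 5 - x 3 4 + 3 * x 3 5 - 2 * x 4 5 := by
    linear_combination -r13 + 2 * h12
  have h02 : x 0 2 = x 0 4 + 3 * x 1 3 - 5 * x 1 5 - 2 * x 2 3 - x 2 4 + 4 * x 2 5 + 3 * x 3 5 -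
      4 * x 4 5 := by
    linear_combination -r01 - r05 - 2 * h05 + 2 * h12 - h14
  have h03 : x 0 3 = x 0 4 + 3 * x 1 3 - 3 * x 1 5 - 2 * x 2 3 - x 2 4 + 3 * x 2 5 + 2 * x 3 5 -
      2 * x 4 5 := by
    linear_combination -r05 + h02
  rw [h01, h02, h03, h05, h12, h14]
  ring_nf
  reduce_mod_char!

/-- char 5: the alternating cocycle sum of e²+ce+4be+d²+3bd+2ad+c²+3bc+3ac+2b² over a permitted coloring of ∂Δ⁵ vanishes. -/
theorem statement16 (F : Type*) [Field F] [CharP F 5]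
    (χ : Finset (Fin 6) → F × F) (hχ : Permitted χ) :
    ∑ i : Fin 6, (-1 : F) ^ (i : ℕ) *
      (let a := xv F χ i 0; let b := xv F χ i 1; let c := xv F χ i 2;
       let d := xv F χ i 3; let e := xv F χ i 4;
       e^2 + c*e + 4*b*e + d^2 + 3*b*d + 2*a*d + c^2 + 3*b*c + 3*a*c + 2*b^2) = 0 := by
  simp only [xv_eq_xOpposite]
  exact alternating_sum_eq_zero_of_edge_relations (xOpposite χ) (xOpposite_comm χ)
    fun _ _ _ _ => hχ.sum_eq_sum
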